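/- For every integer k with 1 ≤ k ≤ (n choose 2): n·log(k/n) − n ≤ log |{π ∈ S_n : d_KT(π, id) ≤ k}| ≤ n·log(1 + k/n) + n, where log denotes the natural logarithm (the upper bound also holds for k = 0). -/

import Mathlib

open Finset

/-- Kendall tau distance between two permutations of `Fin n`. -/
def dKT (n : ℕ) (π σ : Equiv.Perm (Fin n)) : ℕ :=
  (Finset.univ.filter fun q : Fin n × Fin n => σ q.1 < σ q.2 ∧ π q.2 < π q.1).card

/-! The Lehmer code `c i = #{j > i | π j < π i}` is injective, takes values in `∏ i, [0, n - i)`,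
hence is onto it by counting, and `∑ i, c i` is the number of inversions of `π`.
Upper bound: permutations with at most `k` inversions inject into tuples with sum at most `k`,
of which there are `(n + k).choose n ≤ (n + k)^n / n!`, and `n! ≥ (n / e)^n`.
Lower bound: with `m = k / n`, every code with all entries at most `m` has sum at most `k`;
there are `∏ i, min (n - i) (m + 1) ≥ n! ((m + 1) / n)^n ≥ ((m + 1) / e)^n` of them. -/

open scoped Nat

theorem Finset.injOn_card_filter_lt {α : Type*} [LinearOrder α] (s : Finset α) :
    Set.InjOn (fun a => #{x ∈ s | x < a}) s := by
  have hmono : StrictMonoOn (fun a => #{x ∈ s | x < a}) s := fun a ha b _ hab =>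
    card_lt_card <| ssubset_iff_of_subset (monotone_filter_right _ fun _ _ h => h.trans hab)
      |>.2 ⟨a, mem_filter.2 ⟨ha, hab⟩, by simp⟩
  exact hmono.injOn

theorem prod_fin_sub_eq_factorial (n : ℕ) : ∏ i : Fin n, (n - i : ℕ) = n ! := by
  rw [Fin.prod_univ_eq_prod_range (fun i => n - i), ← Nat.descFactorial_eq_prod_range,
    Nat.descFactorial_self]

theorem card_piAntidiag_univ (ι : Type*) [Fintype ι] [DecidableEq ι] (k : ℕ) :
    #(piAntidiag (univ : Finset ι) k) = (Fintype.card ι + k - 1).choose k := by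
  rw [← map_sym_eq_piAntidiag, card_map, sym_univ, Finset.card_univ, Sym.card_sym_eq_choose]

theorem pow_div_exp_le_factorial (n : ℕ) : ((n : ℝ) / Real.exp 1) ^ n ≤ n ! := by
  have h := Real.pow_div_factorial_le_exp (n : ℝ) n.cast_nonneg n
  rw [div_le_iff₀ (by positivity), ← Real.exp_one_pow, mul_comm, ← div_le_iff₀ (by positivity),
    ← div_pow] at h
  exact h

theorem choose_add_le_pow (n k : ℕ) :
    ((n + k).choose n : ℝ) ≤ ((1 + k / n) * Real.exp 1) ^ n := by
  rcases n.eq_zero_or_pos with rfl | hn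
  · simp
  have hn' : (0 : ℝ) < n := by exact_mod_cast hn
  calc ((n + k).choose n : ℝ) ≤ ((n + k : ℕ) : ℝ) ^ n / n ! := Nat.choose_le_pow_div n (n + k)
    _ ≤ ((n + k : ℕ) : ℝ) ^ n / ((n : ℝ) / Real.exp 1) ^ n := by
        gcongr
        exact pow_div_exp_le_factorial n
    _ = ((1 + k / n) * Real.exp 1) ^ n := by
        rw [← div_pow]
        congr 1
        field_simp
        push_cast
        ring

theorem pow_div_exp_le_prod_min (n M : ℕ) (hM : M ≤ n) :
    ((M : ℝ) / Real.exp 1) ^ n ≤ (∏ i : Fin n, min (n - i) M : ℕ) := by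
  rcases n.eq_zero_or_pos with rfl | hn
  · simp
  have hn' : (0 : ℝ) < n := by exact_mod_cast hn
  calc ((M : ℝ) / Real.exp 1) ^ n = ((n : ℝ) / Real.exp 1) ^ n * (M / n) ^ n := by
        rw [← mul_pow]; congr 1; field_simp
    _ ≤ (n ! : ℝ) * (M / n) ^ n := by gcongr; exact pow_div_exp_le_factorial n
    _ = ∏ i : Fin n, ((n - i : ℕ) : ℝ) * (M / n) := by
        rw [prod_mul_distrib, prod_const, Finset.card_univ, Fintype.card_fin, ← Nat.cast_prod,
          prod_fin_sub_eq_factorial]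
    _ ≤ (∏ i : Fin n, min (n - i) M : ℕ) := by
        rw [Nat.cast_prod]
        refine prod_le_prod (fun i _ => by positivity) fun i _ => ?_
        have hi : ((n - i : ℕ) : ℝ) ≤ n := by exact_mod_cast Nat.sub_le n i
        have hM' : (M : ℝ) ≤ n := by exact_mod_cast hM
        rw [Nat.cast_min]
        refine le_min (mul_le_of_le_one_right (by positivity) (div_le_one_of_le₀ hM' hn'.le)) ?_
        rw [mul_div_left_comm]
        exact mul_le_of_le_one_right (by positivity) (div_le_one_of_le₀ hi hn'.le)

section

variable {n : ℕ}

theorem dKT_self (π : Equiv.Perm (Fin n)) : dKT n π π = 0 := by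
  rw [dKT, card_eq_zero, filter_eq_empty_iff]
  exact fun q _ h => (h.1.trans h.2).false

def lehmerCode (π : Equiv.Perm (Fin n)) (i : Fin n) : ℕ :=
  #{j | i < j ∧ π j < π i}

theorem sum_lehmerCode (π : Equiv.Perm (Fin n)) : ∑ i, lehmerCode π i = dKT n π 1 := by
  rw [dKT, card_filter, Fintype.sum_prod_type]
  simp only [lehmerCode, card_filter, Equiv.Perm.coe_one, id]
  rfl

theorem lehmerCode_lt (π : Equiv.Perm (Fin n)) (i : Fin n) : lehmerCode π i < n - i := by
  have h : lehmerCode π i ≤ #(Ioi i) :=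
    card_le_card fun j hj => mem_Ioi.2 (mem_filter.1 hj).2.1
  rw [Fin.card_Ioi] at h
  omega

theorem lehmerCode_eq_card (π : Equiv.Perm (Fin n)) (i : Fin n) :
    lehmerCode π i = #{v ∈ ((Iio i).image π)ᶜ | v < π i} := by
  refine card_nbij' π π.symm ?_ ?_ (fun j _ => by simp) (fun v _ => by simp)
  · intro j hj
    simp only [mem_coe, mem_filter, mem_univ, true_and, mem_compl, mem_image, mem_Iio,
      EmbeddingLike.apply_eq_iff_eq, not_exists, not_and] at hj ⊢
    exact ⟨fun x hx hxj => (hxj ▸ hx).not_gt hj.1, hj.2⟩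
  · intro v hv
    simp only [mem_coe, mem_filter, mem_univ, true_and, mem_compl, mem_image, mem_Iio,
      not_exists, not_and] at hv ⊢
    refine ⟨lt_of_le_of_ne (not_lt.1 fun h => hv.1 _ h (by simp)) fun h => ?_, by simpa using hv.2⟩
    simp [h] at hv

theorem lehmerCode_injective : Function.Injective (lehmerCode (n := n)) := by
  intro π τ h
  refine Equiv.ext fun i => WellFoundedLT.induction (motive := fun i => π i = τ i) i fun i ih => ?_
  have hprefix : (Iio i).image π = (Iio i).image τ := image_congr fun j hj => ih j (mem_Iio.1 hj)
  have hcode : lehmerCode π i = lehmerCode τ i := congrFun h i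
  rw [lehmerCode_eq_card, lehmerCode_eq_card, hprefix] at hcode
  refine injOn_card_filter_lt _ ?_ ?_ hcode
  · simp [← hprefix]
  · simp

theorem image_lehmerCode :
    univ.image lehmerCode = Fintype.piFinset fun i : Fin n => range (n - i) := by
  refine eq_of_subset_of_card_le (fun c hc => ?_) ?_
  · obtain ⟨π, -, rfl⟩ := mem_image.1 hc
    exact Fintype.mem_piFinset.2 fun i => mem_range.2 (lehmerCode_lt π i)
  · rw [card_image_of_injective _ lehmerCode_injective, Fintype.card_piFinset]
    simp [prod_fin_sub_eq_factorial, Fintype.card_perm]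

theorem card_dKT_le_le_choose (n k : ℕ) :
    #{π : Equiv.Perm (Fin n) | dKT n π 1 ≤ k} ≤ (n + k).choose n := by
  calc #{π : Equiv.Perm (Fin n) | dKT n π 1 ≤ k}
      ≤ #(piAntidiag (univ : Finset (Fin (n + 1))) k) := by
        -- the extra coordinate `k - dKT n π 1` is slack making the sum exactly `k`
        refine card_le_card_of_injOn (fun π => Fin.cons (k - dKT n π 1) (lehmerCode π)) ?_ ?_
        · intro π hπ
          simp only [mem_coe, mem_filter, mem_univ, true_and] at hπ
          simp [Fin.sum_univ_succ, sum_lehmerCode, hπ]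
        · exact fun π _ τ _ h => lehmerCode_injective (Fin.cons_injective2 h).2
    _ = (n + k).choose n := by
        rw [card_piAntidiag_univ, Fintype.card_fin, Nat.add_right_comm, Nat.add_sub_cancel,
          Nat.choose_symm_add]

theorem prod_min_le_card_dKT_le (n m : ℕ) :
    ∏ i : Fin n, min (n - i) (m + 1) ≤ #{π : Equiv.Perm (Fin n) | dKT n π 1 ≤ n * m} := by
  set box := Fintype.piFinset fun i : Fin n => range (min (n - i) (m + 1))
  have hbox :
      box ⊆ ({π : Equiv.Perm (Fin n) | dKT n π 1 ≤ n * m} : Finset _).image lehmerCode := by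
    intro c hc
    have hc' := Fintype.mem_piFinset.1 hc
    obtain ⟨π, -, rfl⟩ := mem_image.1 <| image_lehmerCode.symm ▸
      Fintype.mem_piFinset.2 fun i => mem_range.2 ((mem_range.1 (hc' i)).trans_le (min_le_left ..))
    refine mem_image_of_mem _ (mem_filter.2 ⟨mem_univ _, ?_⟩)
    calc dKT n π 1 = ∑ i, lehmerCode π i := (sum_lehmerCode π).symm
      _ ≤ ∑ _i : Fin n, m := sum_le_sum fun i _ =>
          Nat.lt_succ_iff.1 ((mem_range.1 (hc' i)).trans_le (min_le_right ..))
      _ = n * m := by simp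
  calc ∏ i : Fin n, min (n - i) (m + 1) = #box := by simp [box, Fintype.card_piFinset]
    _ ≤ _ := (card_le_card hbox).trans card_image_le

end

/-- **Lemma 1 (number of permutations with at most `k` inversions).**
For `1 ≤ k ≤ (n choose 2)`,
`n log(k/n) - n ≤ log #{π : d_KT(π, id) ≤ k} ≤ n log(1 + k/n) + n`,
and the upper bound also holds for `k = 0`. -/
theorem card_perms_few_inversions (n k : ℕ) :
    (k ≤ n.choose 2 →
      Real.log ((Finset.univ.filter fun π : Equiv.Perm (Fin n) => dKT n π 1 ≤ k).card) ≤
        (n : ℝ) * Real.log (1 + (k : ℝ) / (n : ℝ)) + n) ∧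
    (1 ≤ k → k ≤ n.choose 2 →
      (n : ℝ) * Real.log ((k : ℝ) / (n : ℝ)) - n ≤
        Real.log ((Finset.univ.filter fun π : Equiv.Perm (Fin n) => dKT n π 1 ≤ k).card)) := by
  have hpos : (0 : ℝ) < #{π : Equiv.Perm (Fin n) | dKT n π 1 ≤ k} := by
    exact_mod_cast card_pos.2 ⟨1, by simp [dKT_self]⟩
  refine ⟨fun _ => ?_, fun hk1 hk2 => ?_⟩
  · calc _ ≤ Real.log (((1 + k / n) * Real.exp 1) ^ n) := Real.log_le_log hpos <|
          (Nat.cast_le.2 (card_dKT_le_le_choose n k)).trans (choose_add_le_pow n k)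
      _ = n * Real.log (1 + k / n) + n := by
          rw [Real.log_pow, Real.log_mul (by positivity) (by positivity), Real.log_exp, mul_add,
            mul_one]
  · have hn : n ≠ 0 := by
      rintro rfl
      simp at hk2
      omega
    have hm : k / n + 1 ≤ n :=
      (Nat.div_lt_iff_lt_mul (Nat.pos_of_ne_zero hn)).2 (by
        simpa [sq] using hk2.trans_lt (Nat.choose_lt_pow hn le_rfl))
    have hkn : (k : ℝ) / n ≤ (k / n + 1 : ℕ) := by
      rw [div_le_iff₀ (by positivity)]
      exact_mod_cast (mul_comm n _ ▸ Nat.lt_mul_div_succ k (Nat.pos_of_ne_zero hn)).le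
    calc _ = Real.log (((k : ℝ) / n / Real.exp 1) ^ n) := by
          rw [Real.log_pow, Real.log_div (x := k / n) (by positivity) (by positivity),
            Real.log_exp, mul_sub, mul_one]
      _ ≤ Real.log ((((k / n + 1 : ℕ) : ℝ) / Real.exp 1) ^ n) :=
          Real.log_le_log (by positivity) (by gcongr)
      _ ≤ _ := Real.log_le_log (by positivity) <| (pow_div_exp_le_prod_min n _ hm).trans <| by
          exact_mod_cast (prod_min_le_card_dKT_le n (k / n)).trans <|
            card_le_card <| monotone_filter_right _ fun _ _ h => h.trans (Nat.mul_div_le k n)
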